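/- arXiv:2604.22426 — 4 statements merged into one kernel-verified Lean document; each statement's English description precedes it below -/
import Mathlib

section
/- Let C₁ > 0, λ > 0 and θ ∈ (0,1]. Let hmin : ℝ → ℝ satisfy hmin(h) > 0 for every h > 0 and hmin(h)/h → θ as h → 0 from the right. For h > 0 set M(h) = C₁·(1 + 1/(2·λ·hmin(h))) and ρ(h) = M(h)/(1 + M(h)). Then ρ(h)^{1/h} → exp(−2·λ·θ/C₁) as h → 0 from the right. -/
open Filter Real Set
open scoped Topology

/-!
Since `ρ = 1 + (ρ - 1)` with `ρ - 1 → 0`, the classical limit `(1 + g) ^ (1 / h) → exp t` applies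
as soon as `(ρ - 1) / h → t`. Writing `hmin = q h`, one has
`(ρ - 1) / h = -1 / (h (1 + M)) = -2λq / (2λq h (1 + C₁) + C₁)`, which tends to `-2λθ / C₁`.
-/

lemma tendsto_rpow_one_div_exp_of_tendsto_sub_one_div {f : ℝ → ℝ} {t : ℝ}
    (hf : Tendsto (fun h => (f h - 1) / h) (𝓝[>] 0) (𝓝 t)) :
    Tendsto (fun h => f h ^ (1 / h)) (𝓝[>] 0) (𝓝 (exp t)) := by
  have hg : Tendsto (fun x => x * (f x⁻¹ - 1)) atTop (𝓝 t) :=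
    (hf.comp tendsto_inv_atTop_nhdsGT_zero).congr fun x => by
      simp [div_eq_mul_inv, mul_comm]
  exact ((tendsto_one_add_rpow_exp_of_tendsto hg).comp tendsto_inv_nhdsGT_zero).congr fun h => by
    simp [one_div]

lemma contraction_factor_sub_one_div {C₁ lam h m : ℝ} (hC : 0 < C₁) (hlam : 0 < lam)
    (hh : 0 < h) (hm : 0 < m) :
    (C₁ * (1 + 1 / (2 * lam * m)) / (1 + C₁ * (1 + 1 / (2 * lam * m))) - 1) / h =
      -(2 * lam * (m / h)) / (2 * lam * (m / h) * h * (1 + C₁) + C₁) := by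
  have hM : 0 < 1 + C₁ * (1 + 1 / (2 * lam * m)) := by positivity
  field_simp
  ring

theorem discrete_contraction_asymptotics_pos_lambda_general
    (C₁ lam θ : ℝ) (hC : 0 < C₁) (hlam : 0 < lam)
    (hmin : ℝ → ℝ) (hminpos : ∀ h : ℝ, 0 < h → 0 < hmin h)
    (hquasi : Tendsto (fun h : ℝ => hmin h / h) (nhdsWithin 0 (Set.Ioi 0)) (nhds θ))
    (M ρ : ℝ → ℝ)
    (hM : ∀ h : ℝ, 0 < h → M h = C₁ * (1 + 1 / (2 * lam * hmin h)))
    (hρ : ∀ h : ℝ, 0 < h → ρ h = M h / (1 + M h)) :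
    Tendsto (fun h : ℝ => ρ h ^ (1 / h)) (nhdsWithin 0 (Set.Ioi 0))
      (nhds (Real.exp (-(2 * lam * θ) / C₁))) := by
  apply tendsto_rpow_one_div_exp_of_tendsto_sub_one_div
  have hnum := tendsto_const_nhds (x := 2 * lam).mul hquasi
  have hid : Tendsto id (𝓝[>] (0 : ℝ)) (𝓝 0) := tendsto_id.mono_left nhdsWithin_le_nhds
  have hden := ((hnum.mul hid).mul_const (1 + C₁)).add_const C₁
  have hlim := hnum.neg.div hden (by simpa using hC.ne')
  simp only [mul_zero, zero_mul, zero_add] at hlim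
  refine hlim.congr' ?_
  filter_upwards [self_mem_nhdsWithin] with h hh
  rw [hρ h hh, hM h hh, contraction_factor_sub_one_div hC hlam hh (hminpos h hh)]
  rfl

theorem discrete_contraction_asymptotics_pos_lambda
    (C₁ lam θ : ℝ) (hC : 0 < C₁) (hlam : 0 < lam) (hθ0 : 0 < θ) (hθ1 : θ ≤ 1)
    (hmin : ℝ → ℝ) (hminpos : ∀ h : ℝ, 0 < h → 0 < hmin h)
    (hquasi : Tendsto (fun h : ℝ => hmin h / h) (nhdsWithin 0 (Set.Ioi 0)) (nhds θ))
    (M ρ : ℝ → ℝ)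
    (hM : ∀ h : ℝ, 0 < h → M h = C₁ * (1 + 1 / (2 * lam * hmin h)))
    (hρ : ∀ h : ℝ, 0 < h → ρ h = M h / (1 + M h)) :
    Tendsto (fun h : ℝ => ρ h ^ (1 / h)) (nhdsWithin 0 (Set.Ioi 0))
      (nhds (Real.exp (-(2 * lam * θ) / C₁))) :=
  discrete_contraction_asymptotics_pos_lambda_general C₁ lam θ hC hlam hmin hminpos hquasi M ρ hM hρ
end

section
/- Let C₂ > 0 and θ ∈ (0,1]. Let hmin : ℝ → ℝ satisfy hmin(h) > 0 for every h > 0 and hmin(h)/h → θ as h → 0 from the right. For h > 0 set M(h) = C₂·(1 + 1/hmin(h)) and ρ(h) = M(h)/(1 + M(h)). Then ρ(h)^{1/h} → exp(−θ/C₂) as h → 0 from the right. -/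
/-!
Since `ρ = (1 + 1/M)⁻¹` and `1/M = hmin / (C₂ (hmin + 1))`, we have `ρ^{1/h} = ((1 + f)^{1/h})⁻¹`
with `f = hmin / (C₂ (hmin + 1))`. Quasi-uniformity forces `hmin → 0` and `f / h → θ / C₂`,
and `log (1 + f) ~ f` as `f → 0` then gives `(1 + f)^{1/h} → exp (θ / C₂)`.
-/

open Filter Real Set Topology

section CompoundInterest

variable {α : Type*} {l : Filter α} {f g : α → ℝ} {a : ℝ}

theorem Filter.Tendsto.log_one_add_div (hf : Tendsto f l (𝓝 0))
    (hfg : Tendsto (fun x => f x / g x) l (𝓝 a)) :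
    Tendsto (fun x => Real.log (1 + f x) / g x) l (𝓝 a) := by
  set φ : ℝ → ℝ := fun y => Real.log (1 + y)
  have hφ : HasDerivAt φ 1 0 := by
    simpa using ((hasDerivAt_id (0 : ℝ)).const_add 1).log (by norm_num)
  -- `dslope φ 0` is continuous at `0` with value `φ'(0) = 1`, and `log (1 + y) = y * dslope φ 0 y`
  -- holds for every `y`, including `y = 0`.
  have hslope : Tendsto (fun x => dslope φ 0 (f x)) l (𝓝 1) := by
    have hcont := continuousAt_dslope_same.mpr hφ.differentiableAt
    rw [ContinuousAt, dslope_same, hφ.deriv] at hcont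
    exact hcont.comp hf
  refine (one_mul a ▸ hslope.mul hfg).congr fun x => ?_
  have hsplit := sub_smul_dslope φ 0 (f x)
  simp only [φ, sub_zero, add_zero, log_one, smul_eq_mul] at hsplit
  rw [← hsplit]
  ring

theorem Filter.Tendsto.one_add_rpow_one_div (hf : Tendsto f l (𝓝 0))
    (hfg : Tendsto (fun x => f x / g x) l (𝓝 a)) :
    Tendsto (fun x => (1 + f x) ^ (1 / g x)) l (𝓝 (Real.exp a)) := by
  have hpos : ∀ᶠ x in l, 0 < 1 + f x := by
    have := hf.const_add (1 : ℝ)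
    rw [add_zero] at this
    exact this.eventually (lt_mem_nhds one_pos)
  refine ((continuous_exp.tendsto a).comp (Tendsto.log_one_add_div hf hfg)).congr' ?_
  filter_upwards [hpos] with x hx
  rw [Function.comp_apply, rpow_def_of_pos hx, mul_one_div]

end CompoundInterest

theorem discrete_contraction_asymptotics_zero_lambda_general
    (C₂ θ : ℝ) (hC : 0 < C₂)
    (hmin : ℝ → ℝ) (hminpos : ∀ h : ℝ, 0 < h → 0 < hmin h)
    (hquasi : Tendsto (fun h : ℝ => hmin h / h) (nhdsWithin 0 (Set.Ioi 0)) (nhds θ))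
    (M ρ : ℝ → ℝ)
    (hM : ∀ h : ℝ, 0 < h → M h = C₂ * (1 + 1 / hmin h))
    (hρ : ∀ h : ℝ, 0 < h → ρ h = M h / (1 + M h)) :
    Tendsto (fun h : ℝ => ρ h ^ (1 / h)) (nhdsWithin 0 (Set.Ioi 0))
      (nhds (Real.exp (-θ / C₂))) := by
  have hmin0 : Tendsto hmin (𝓝[>] 0) (𝓝 0) := by
    refine (mul_zero θ ▸ hquasi.mul (tendsto_nhdsWithin_of_tendsto_nhds tendsto_id)).congr' ?_
    filter_upwards [self_mem_nhdsWithin] with h (hh : 0 < h)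
    exact div_mul_cancel₀ _ hh.ne'
  have hden : Tendsto (fun h => C₂ * (hmin h + 1)) (𝓝[>] 0) (𝓝 C₂) := by
    simpa using tendsto_const_nhds.mul (hmin0.add_const 1)
  have hf0 : Tendsto (fun h => hmin h / (C₂ * (hmin h + 1))) (𝓝[>] 0) (𝓝 0) := by
    have := hmin0.div hden hC.ne'
    rwa [zero_div] at this
  have hfh : Tendsto (fun h => hmin h / (C₂ * (hmin h + 1)) / h) (𝓝[>] 0) (𝓝 (θ / C₂)) := by
    refine (hquasi.div hden hC.ne').congr fun h => ?_
    simp only [Pi.div_apply]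
    ring
  rw [neg_div, exp_neg]
  refine ((hf0.one_add_rpow_one_div hfh).inv₀ (exp_ne_zero _)).congr' ?_
  filter_upwards [self_mem_nhdsWithin] with h (hh : 0 < h)
  have hm := hminpos h hh
  have hρ' : ρ h = (1 + hmin h / (C₂ * (hmin h + 1)))⁻¹ := by
    rw [hρ h hh, hM h hh]
    field_simp
    ring
  rw [hρ', inv_rpow (by positivity)]

theorem discrete_contraction_asymptotics_zero_lambda
    (C₂ θ : ℝ) (hC : 0 < C₂) (hθ0 : 0 < θ) (hθ1 : θ ≤ 1)
    (hmin : ℝ → ℝ) (hminpos : ∀ h : ℝ, 0 < h → 0 < hmin h)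
    (hquasi : Tendsto (fun h : ℝ => hmin h / h) (nhdsWithin 0 (Set.Ioi 0)) (nhds θ))
    (M ρ : ℝ → ℝ)
    (hM : ∀ h : ℝ, 0 < h → M h = C₂ * (1 + 1 / hmin h))
    (hρ : ∀ h : ℝ, 0 < h → ρ h = M h / (1 + M h)) :
    Tendsto (fun h : ℝ => ρ h ^ (1 / h)) (nhdsWithin 0 (Set.Ioi 0))
      (nhds (Real.exp (-θ / C₂))) :=
  discrete_contraction_asymptotics_zero_lambda_general C₂ θ hC hmin hminpos hquasi M ρ hM hρ
end

section
/- Let L > 0 and ε > 0, let s be a finite set of positive natural numbers, and let g : ℕ → ℝ. For n ∈ s set k_n = n·π/L, and define on the rectangle (0,L) × (0,ε) the function w(x,y) = Σ_{n∈s} g(n)·(sinh(k_n·(ε − y))/sinh(k_n·ε))·sin(k_n·x), whose partial derivatives are ∂_x w(x,y) = Σ_{n∈s} g(n)·k_n·(sinh(k_n·(ε − y))/sinh(k_n·ε))·cos(k_n·x) and ∂_y w(x,y) = −Σ_{n∈s} g(n)·k_n·(cosh(k_n·(ε − y))/sinh(k_n·ε))·sin(k_n·x). Then the iterated integral ∫₀^L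 ∫₀^ε ( (∂_x w(x,y))² + (∂_y w(x,y))² ) dy dx equals (L/2)·Σ_{n∈s} g(n)²·k_n·coth(k_n·ε), where coth(x) = cosh(x)/sinh(x). -/
/-!
Integrate in `x` first. For fixed `y`, both partial derivatives are finite sums over the
families `cos (k n * x)` and `sin (k n * x)`, which are orthogonal on `[0, L]` with squared
norm `L / 2`, so the `x`-integral is
`L / 2 * ∑ n, (g n * k n / sinh (k n * ε)) ^ 2 * (sinh ^ 2 + cosh ^ 2) (k n * (ε - y))`.
Since `sinh ^ 2 + cosh ^ 2 = cosh (2 ·)`, the `y`-integral of the last factor is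
`sinh (k n * ε) * cosh (k n * ε) / k n`.
-/

open Real intervalIntegral Finset

theorem intervalIntegral_intervalIntegral_swap_of_continuous {F : ℝ → ℝ → ℝ}
    (hF : Continuous (Function.uncurry F)) (a b c d : ℝ) :
    ∫ x in a..b, ∫ y in c..d, F x y = ∫ y in c..d, ∫ x in a..b, F x y :=
  MeasureTheory.intervalIntegral_intervalIntegral_swap <|
    (hF.continuousOn.integrableOn_compact (isCompact_uIcc.prod isCompact_uIcc)).mono_set
      (Set.prod_mono Set.uIoc_subset_uIcc Set.uIoc_subset_uIcc)

theorem integral_sq_sum_of_orthogonal {ι : Type*} [DecidableEq ι] {s : Finset ι}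
    {f : ι → ℝ → ℝ} {a b C : ℝ}
    (hf : ∀ i ∈ s, Continuous (f i))
    (horth : ∀ i ∈ s, ∀ j ∈ s, ∫ x in a..b, f i x * f j x = if i = j then C else 0)
    (c : ι → ℝ) :
    ∫ x in a..b, (∑ i ∈ s, c i * f i x) ^ 2 = C * ∑ i ∈ s, c i ^ 2 := by
  have hcont : ∀ i ∈ s, ∀ j ∈ s, Continuous fun x => c i * f i x * (c j * f j x) :=
    fun i hi j hj => ((hf i hi).const_mul _).mul ((hf j hj).const_mul _)
  simp_rw [pow_two (∑ i ∈ s, _), sum_mul_sum]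
  rw [integral_finsetSum fun i hi =>
    (continuous_finsetSum s (hcont i hi)).intervalIntegrable a b, mul_sum]
  refine sum_congr rfl fun i hi => ?_
  rw [integral_finsetSum fun j hj => (hcont i hi j hj).intervalIntegrable a b]
  simp_rw [mul_mul_mul_comm (c i) (f i _), integral_const_mul]
  simp +contextual [horth i hi, hi, mul_comm, sq]

theorem integral_cos_int_mul_pi_div {L : ℝ} (hL : L ≠ 0) (j : ℤ) :
    ∫ x in (0:ℝ)..L, cos (j * π / L * x) = if j = 0 then L else 0 := by
  split_ifs with hj
  · simp [hj]
  have hc : (j : ℝ) * π / L ≠ 0 := by positivity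
  rw [integral_comp_mul_left (fun x => cos x) hc, integral_cos]
  field_simp
  simp [sin_int_mul_pi]

theorem integral_cos_mul_cos_nat_mul_pi_div {L : ℝ} (hL : L ≠ 0) {n m : ℕ}
    (hn : 0 < n) (hm : 0 < m) :
    ∫ x in (0:ℝ)..L, cos (n * π / L * x) * cos (m * π / L * x) =
      if n = m then L / 2 else 0 := by
  have h : ∀ x, cos (n * π / L * x) * cos (m * π / L * x) =
      (cos (((n - m : ℤ) : ℝ) * π / L * x) +
        cos (((n + m : ℤ) : ℝ) * π / L * x)) / 2 := by
    intro x
    push_cast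
    rw [show (n - m : ℝ) * π / L * x = n * π / L * x - m * π / L * x by ring,
      show (n + m : ℝ) * π / L * x = n * π / L * x + m * π / L * x by ring, cos_sub, cos_add]
    ring
  simp_rw [h]
  rw [integral_div, integral_add ((by fun_prop : Continuous _).intervalIntegrable _ _)
    ((by fun_prop : Continuous _).intervalIntegrable _ _), integral_cos_int_mul_pi_div hL,
    integral_cos_int_mul_pi_div hL]
  have : (n + m : ℤ) ≠ 0 := by omega
  split_ifs <;> simp_all [sub_eq_zero]

theorem integral_sin_mul_sin_nat_mul_pi_div {L : ℝ} (hL : L ≠ 0) {n m : ℕ}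
    (hn : 0 < n) (hm : 0 < m) :
    ∫ x in (0:ℝ)..L, sin (n * π / L * x) * sin (m * π / L * x) =
      if n = m then L / 2 else 0 := by
  have h : ∀ x, sin (n * π / L * x) * sin (m * π / L * x) =
      (cos (((n - m : ℤ) : ℝ) * π / L * x) -
        cos (((n + m : ℤ) : ℝ) * π / L * x)) / 2 := by
    intro x
    push_cast
    rw [show (n - m : ℝ) * π / L * x = n * π / L * x - m * π / L * x by ring,
      show (n + m : ℝ) * π / L * x = n * π / L * x + m * π / L * x by ring, cos_sub, cos_add]
    ring
  simp_rw [h]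
  rw [integral_div, integral_sub ((by fun_prop : Continuous _).intervalIntegrable _ _)
    ((by fun_prop : Continuous _).intervalIntegrable _ _), integral_cos_int_mul_pi_div hL,
    integral_cos_int_mul_pi_div hL]
  have : (n + m : ℤ) ≠ 0 := by omega
  split_ifs <;> simp_all [sub_eq_zero]

theorem integral_cosh (a b : ℝ) : ∫ x in a..b, cosh x = sinh b - sinh a :=
  integral_eq_sub_of_hasDerivAt (fun x _ => hasDerivAt_sinh x)
    (continuous_cosh.intervalIntegrable a b)

theorem integral_sinh_sq_add_cosh_sq_mul_sub {c : ℝ} (hc : c ≠ 0) (ε : ℝ) :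
    ∫ y in (0:ℝ)..ε, (sinh (c * (ε - y)) ^ 2 + cosh (c * (ε - y)) ^ 2) =
      sinh (c * ε) * cosh (c * ε) / c := by
  have h2c : 2 * c ≠ 0 := mul_ne_zero two_ne_zero hc
  have hcosh : ∀ u, sinh (c * u) ^ 2 + cosh (c * u) ^ 2 = cosh (2 * c * u) := fun u => by
    rw [mul_assoc, cosh_two_mul, add_comm]
  simp_rw [hcosh]
  rw [integral_comp_sub_left (fun u => cosh (2 * c * u)), sub_self, sub_zero,
    integral_comp_mul_left (fun u => cosh u) h2c, integral_cosh, mul_zero, sinh_zero, sub_zero,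
    mul_assoc, sinh_two_mul, smul_eq_mul]
  field_simp

theorem dirichlet_energy_strip_general
    (L ε : ℝ) (hL : 0 < L)
    (s : Finset ℕ) (hs : ∀ n ∈ s, 0 < n) (g : ℕ → ℝ)
    (k : ℕ → ℝ) (hk : ∀ n, k n = n * Real.pi / L)
    (wx wy : ℝ → ℝ → ℝ)
    (hwx : ∀ x y : ℝ, wx x y =
      ∑ n ∈ s, g n * k n * (Real.sinh (k n * (ε - y)) / Real.sinh (k n * ε)) * Real.cos (k n * x))
    (hwy : ∀ x y : ℝ, wy x y =
      -∑ n ∈ s, g n * k n * (Real.cosh (k n * (ε - y)) / Real.sinh (k n * ε)) * Real.sin (k n * x)) :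
    (∫ x in (0:ℝ)..L, ∫ y in (0:ℝ)..ε, ((wx x y) ^ 2 + (wy x y) ^ 2)) =
      (L / 2) * ∑ n ∈ s, (g n) ^ 2 * k n * (Real.cosh (k n * ε) / Real.sinh (k n * ε)) := by
  have hk0 : ∀ n ∈ s, k n ≠ 0 := fun n hn => by
    have := hs n hn
    rw [hk]
    positivity
  have hcos : ∀ n ∈ s, ∀ m ∈ s,
      ∫ x in (0:ℝ)..L, cos (k n * x) * cos (k m * x) = if n = m then L / 2 else 0 :=
    fun n hn m hm => by
      simpa only [hk] using integral_cos_mul_cos_nat_mul_pi_div hL.ne' (hs n hn) (hs m hm)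
  have hsin : ∀ n ∈ s, ∀ m ∈ s,
      ∫ x in (0:ℝ)..L, sin (k n * x) * sin (k m * x) = if n = m then L / 2 else 0 :=
    fun n hn m hm => by
      simpa only [hk] using integral_sin_mul_sin_nat_mul_pi_div hL.ne' (hs n hn) (hs m hm)
  have hx : ∀ y, ∫ x in (0:ℝ)..L, (wx x y ^ 2 + wy x y ^ 2) =
      L / 2 * ∑ n ∈ s, (g n * k n / sinh (k n * ε)) ^ 2 *
        (sinh (k n * (ε - y)) ^ 2 + cosh (k n * (ε - y)) ^ 2) := by
    intro y
    simp only [hwx, hwy, neg_sq]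
    rw [integral_add ((by fun_prop : Continuous _).intervalIntegrable _ _)
        ((by fun_prop : Continuous _).intervalIntegrable _ _),
      integral_sq_sum_of_orthogonal (f := fun n x => cos (k n * x)) (by fun_prop) hcos,
      integral_sq_sum_of_orthogonal (f := fun n x => sin (k n * x)) (by fun_prop) hsin,
      ← mul_add, ← sum_add_distrib]
    congr 1
    exact sum_congr rfl fun n _ => by ring
  have hcont : Continuous (Function.uncurry fun x y => wx x y ^ 2 + wy x y ^ 2) := by
    simp only [hwx, hwy]
    fun_prop
  rw [intervalIntegral_intervalIntegral_swap_of_continuous hcont]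
  simp_rw [hx]
  rw [integral_const_mul,
    integral_finsetSum fun n _ => (by fun_prop : Continuous _).intervalIntegrable _ _]
  refine congrArg _ (sum_congr rfl fun n hn => ?_)
  rw [integral_const_mul, integral_sinh_sq_add_cosh_sq_mul_sub (hk0 n hn)]
  field_simp

theorem dirichlet_energy_strip
    (L ε : ℝ) (hL : 0 < L) (hε : 0 < ε)
    (s : Finset ℕ) (hs : ∀ n ∈ s, 0 < n) (g : ℕ → ℝ)
    (k : ℕ → ℝ) (hk : ∀ n, k n = n * Real.pi / L)
    (wx wy : ℝ → ℝ → ℝ)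
    (hwx : ∀ x y : ℝ, wx x y =
      ∑ n ∈ s, g n * k n * (Real.sinh (k n * (ε - y)) / Real.sinh (k n * ε)) * Real.cos (k n * x))
    (hwy : ∀ x y : ℝ, wy x y =
      -∑ n ∈ s, g n * k n * (Real.cosh (k n * (ε - y)) / Real.sinh (k n * ε)) * Real.sin (k n * x)) :
    (∫ x in (0:ℝ)..L, ∫ y in (0:ℝ)..ε, ((wx x y) ^ 2 + (wy x y) ^ 2)) =
      (L / 2) * ∑ n ∈ s, (g n) ^ 2 * k n * (Real.cosh (k n * ε) / Real.sinh (k n * ε)) :=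
  dirichlet_energy_strip_general L ε hL s hs g k hk wx wy hwx hwy
end

section
/- Let λ > 0 and δ ∈ (0,1). Let E : ℝ → ℝ be continuous on [0,1], nonnegative on [0,1], and nondecreasing on [0,1], and assume that 2·λ·∫_s^{s+δ} E(t) dt ≤ E(s+δ) − E(s) for every s ∈ [0, 1−δ]. Then E(s) ≤ exp(−2·λ·(1 − δ − s))·E(1) for every s ∈ [0, 1−δ]. -/
/-!
Write `G u = ∫ t in u..u + δ, E t`. The window inequality says `G' ≥ 2λ G`, so
`u ↦ exp (-2λu) G u` is nondecreasing, while monotonicity of `E` gives `δ E s ≤ G s` and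
`G (1 - δ) ≤ δ E 1`; comparing `u = s` with `u = 1 - δ` yields the bound. Since `E` is only
continuous on `[0, 1]`, `G` is differentiated through a continuous extension of `E` to `ℝ`.
-/

open Set intervalIntegral

theorem hasDerivAt_integral_window {F : Type*} [NormedAddCommGroup F] [NormedSpace ℝ F]
    [CompleteSpace F] {f : ℝ → F} (hf : Continuous f) (δ x : ℝ) :
    HasDerivAt (fun u => ∫ t in u..u + δ, f t) (f (x + δ) - f x) x := by
  have hdiff : (fun u => ∫ t in u..u + δ, f t) =
      fun u => (∫ t in (0 : ℝ)..u + δ, f t) - ∫ t in (0 : ℝ)..u, f t := by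
    funext u
    exact (integral_interval_sub_left (hf.intervalIntegrable _ _) (hf.intervalIntegrable _ _)).symm
  rw [hdiff]
  exact ((hf.integral_hasStrictDerivAt 0 (x + δ)).hasDerivAt.comp_add_const x δ).sub
    (hf.integral_hasStrictDerivAt 0 x).hasDerivAt

theorem monotoneOn_exp_neg_mul_mul_of_mul_le_deriv {f f' : ℝ → ℝ} {D : Set ℝ} {c : ℝ}
    (hD : Convex ℝ D) (hf : ContinuousOn f D)
    (hf' : ∀ x ∈ interior D, HasDerivAt f (f' x) x)
    (hle : ∀ x ∈ interior D, c * f x ≤ f' x) :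
    MonotoneOn (fun x => Real.exp (-(c * x)) * f x) D := by
  have hderiv : ∀ x ∈ interior D, HasDerivAt (fun x => Real.exp (-(c * x)) * f x)
      (Real.exp (-(c * x)) * (f' x - c * f x)) x := fun x hx => by
    have hexp : HasDerivAt (fun x => Real.exp (-(c * x))) (Real.exp (-(c * x)) * -c) x := by
      simpa using ((hasDerivAt_id x).const_mul c).neg.exp
    exact (hexp.fun_mul (hf' x hx)).congr_deriv (by ring)
  exact monotoneOn_of_hasDerivWithinAt_nonneg hD (by fun_prop)
    (fun x hx => (hderiv x hx).hasDerivWithinAt)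
    fun x hx => mul_nonneg (Real.exp_pos _).le (sub_nonneg.2 (hle x hx))

theorem le_exp_neg_mul_sub_mul_of_mul_le_deriv {f f' : ℝ → ℝ} {D : Set ℝ} {c : ℝ}
    (hD : Convex ℝ D) (hf : ContinuousOn f D)
    (hf' : ∀ x ∈ interior D, HasDerivAt f (f' x) x)
    (hle : ∀ x ∈ interior D, c * f x ≤ f' x) {x y : ℝ} (hx : x ∈ D) (hy : y ∈ D)
    (hxy : x ≤ y) : f x ≤ Real.exp (-(c * (y - x))) * f y := by
  have h := monotoneOn_exp_neg_mul_mul_of_mul_le_deriv hD hf hf' hle hx hy hxy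
  have hsplit : Real.exp (-(c * x)) * Real.exp (-(c * (y - x))) = Real.exp (-(c * y)) := by
    rw [← Real.exp_add]; ring_nf
  dsimp only at h
  rw [← hsplit, mul_assoc] at h
  exact le_of_mul_le_mul_left h (Real.exp_pos _)

theorem MonotoneOn.mul_le_integral {f : ℝ → ℝ} {a b : ℝ} (hf : MonotoneOn f (Icc a b))
    (hab : a ≤ b) : (b - a) * f a ≤ ∫ x in a..b, f x := by
  have hint := (uIcc_of_le hab ▸ hf).intervalIntegrable (μ := MeasureTheory.volume)
  calc (b - a) * f a = ∫ _ in a..b, f a := by simp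
    _ ≤ ∫ x in a..b, f x := integral_mono_on hab intervalIntegrable_const hint
        fun x hx => hf ⟨le_rfl, hab⟩ hx hx.1

theorem MonotoneOn.integral_le_mul {f : ℝ → ℝ} {a b : ℝ} (hf : MonotoneOn f (Icc a b))
    (hab : a ≤ b) : ∫ x in a..b, f x ≤ (b - a) * f b := by
  have hint := (uIcc_of_le hab ▸ hf).intervalIntegrable (μ := MeasureTheory.volume)
  calc ∫ x in a..b, f x ≤ ∫ _ in a..b, f b := integral_mono_on hab hint intervalIntegrable_const
        fun x hx => hf hx ⟨hab, le_rfl⟩ hx.2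
    _ = (b - a) * f b := by simp

theorem continuous_saint_venant_general
    (lam δ : ℝ) (hδ0 : 0 < δ)
    (E : ℝ → ℝ)
    (hcont : ContinuousOn E (Icc 0 1))
    (hmono : MonotoneOn E (Icc 0 1))
    (hwindow : ∀ s ∈ Icc (0:ℝ) (1 - δ),
      2 * lam * ∫ t in s..(s + δ), E t ≤ E (s + δ) - E s) :
    ∀ s ∈ Icc (0:ℝ) (1 - δ), E s ≤ Real.exp (-(2 * lam * (1 - δ - s))) * E 1 := by
  intro s hs
  set Ē := IccExtend (zero_le_one : (0 : ℝ) ≤ 1) ((Icc 0 1).domRestrict E)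
  have hĒ : Continuous Ē := hcont.domRestrict.Icc_extend'
  have hĒE : EqOn Ē E (Icc 0 1) := fun t ht => IccExtend_of_mem _ _ ht
  have hsub : ∀ u ∈ Icc (0 : ℝ) (1 - δ), Icc u (u + δ) ⊆ Icc 0 1 :=
    fun u hu => Icc_subset_Icc hu.1 (by linarith [hu.2])
  have hĒint : ∀ u ∈ Icc (0 : ℝ) (1 - δ), ∫ t in u..u + δ, Ē t = ∫ t in u..u + δ, E t :=
    fun u hu => integral_congr (uIcc_of_le (by linarith : u ≤ u + δ) ▸ hĒE.mono (hsub u hu))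
  have hĒwindow : ∀ x ∈ Icc (0 : ℝ) (1 - δ),
      2 * lam * ∫ t in x..x + δ, Ē t ≤ Ē (x + δ) - Ē x := fun x hx => by
    rw [hĒint x hx, hĒE (hsub x hx ⟨by linarith, le_rfl⟩), hĒE (hsub x hx ⟨le_rfl, by linarith⟩)]
    exact hwindow x hx
  have hend : 1 - δ ∈ Icc (0 : ℝ) (1 - δ) := ⟨hs.1.trans hs.2, le_rfl⟩
  have hgrowth := le_exp_neg_mul_sub_mul_of_mul_le_deriv (convex_Icc 0 (1 - δ))
    (fun x _ => (hasDerivAt_integral_window hĒ δ x).continuousAt.continuousWithinAt)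
    (fun x _ => hasDerivAt_integral_window hĒ δ x)
    (fun x hx => hĒwindow x (interior_subset hx)) hs hend hs.2
  rw [hĒint s hs, hĒint (1 - δ) hend, sub_add_cancel] at hgrowth
  have hlow : δ * E s ≤ ∫ t in s..s + δ, E t := by
    simpa using (hmono.mono (hsub s hs)).mul_le_integral (by linarith)
  have hup : ∫ t in (1 - δ)..1, E t ≤ δ * E 1 := by
    simpa using (hmono.mono (Icc_subset_Icc hend.1 le_rfl)).integral_le_mul (by linarith)
  refine le_of_mul_le_mul_left ?_ hδ0
  calc δ * E s ≤ ∫ t in s..s + δ, E t := hlow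
    _ ≤ Real.exp (-(2 * lam * (1 - δ - s))) * ∫ t in (1 - δ)..1, E t := hgrowth
    _ ≤ Real.exp (-(2 * lam * (1 - δ - s))) * (δ * E 1) := by gcongr
    _ = δ * (Real.exp (-(2 * lam * (1 - δ - s))) * E 1) := by ring

theorem continuous_saint_venant
    (lam δ : ℝ) (hlam : 0 < lam) (hδ0 : 0 < δ) (hδ1 : δ < 1)
    (E : ℝ → ℝ)
    (hcont : ContinuousOn E (Icc 0 1))
    (hnonneg : ∀ t ∈ Icc (0:ℝ) 1, 0 ≤ E t)
    (hmono : MonotoneOn E (Icc 0 1))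
    (hwindow : ∀ s ∈ Icc (0:ℝ) (1 - δ),
      2 * lam * ∫ t in s..(s + δ), E t ≤ E (s + δ) - E s) :
    ∀ s ∈ Icc (0:ℝ) (1 - δ), E s ≤ Real.exp (-(2 * lam * (1 - δ - s))) * E 1 :=
  continuous_saint_venant_general lam δ hδ0 E hcont hmono hwindow
end
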